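/- Let H be a finite simple graph. A three-element set T of vertices of the augmented pattern H⁺ is a triangle (3-clique) in H⁺ if and only if T consists of vertices of H and T is a triangle in H. In particular, H⁺ has exactly the same number of triangles as H. -/

import Mathlib

/-!
The new vertices of `H⁺` are pairwise non-adjacent, and the two neighbours of a new vertex
`x_{uv}` are `u` and `v`, which are non-adjacent because `{u,v}` is a non-edge of `H`. So no
triangle of `H⁺` contains a new vertex, and on the old vertices `H⁺` induces `H`: the triangles
of `H⁺` are exactly those of the copy `H.map Function.Embedding.inl` of `H`.
-/

open SimpleGraph

/-- Vertex type of the augmented pattern `H⁺`: the vertices of `H` together with two new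
vertices `(s, false)` and `(s, true)` for every non-edge `s = {u,v}` of `H`. -/
abbrev AugVert {V : Type*} (H : SimpleGraph V) : Type _ :=
  V ⊕ ({s : Sym2 V // ¬ s.IsDiag ∧ s ∉ H.edgeSet} × Bool)

/-- The augmented pattern `H⁺`: all edges of `H`, together with, for each non-edge
`{u,v}` of `H`, the four edges joining `u` and `v` to the two new vertices
`(⟨{u,v},_⟩, false)` and `(⟨{u,v},_⟩, true)`. -/
def augment {V : Type*} (H : SimpleGraph V) : SimpleGraph (AugVert H) :=
  SimpleGraph.fromRel (fun x y =>
    match x, y with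
    | Sum.inl a, Sum.inl b => H.Adj a b
    | Sum.inl a, Sum.inr p => a ∈ p.1.1
    | _, _ => False)

namespace SimpleGraph

variable {V : Type*} {H : SimpleGraph V}

@[simp]
lemma augment_adj_inl_inl {a b : V} : (augment H).Adj (.inl a) (.inl b) ↔ H.Adj a b := by
  simp only [augment, fromRel_adj]
  exact ⟨fun ⟨_, h⟩ ↦ h.elim id fun h ↦ h.symm, fun h ↦ ⟨by simpa using h.ne, .inl h⟩⟩

@[simp]
lemma augment_adj_inl_inr {a : V} {p : {s : Sym2 V // ¬ s.IsDiag ∧ s ∉ H.edgeSet} × Bool} :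
    (augment H).Adj (.inl a) (.inr p) ↔ a ∈ p.1.1 := by
  simp only [augment, fromRel_adj]
  exact ⟨fun ⟨_, h⟩ ↦ h.elim id False.elim, fun h ↦ ⟨by simp, .inl h⟩⟩

@[simp]
lemma augment_not_adj_inr_inr {p q : {s : Sym2 V // ¬ s.IsDiag ∧ s ∉ H.edgeSet} × Bool} :
    ¬ (augment H).Adj (.inr p) (.inr q) := by
  simp [augment]

lemma map_inl_le_augment : H.map Function.Embedding.inl ≤ augment H := by
  intro x y hxy
  obtain ⟨a, b, hab, rfl, rfl⟩ := (map_adj _ _ _ _).mp hxy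
  exact augment_adj_inl_inl.mpr hab

lemma augment_not_adj_of_adj_inr {p : {s : Sym2 V // ¬ s.IsDiag ∧ s ∉ H.edgeSet} × Bool}
    {x y : AugVert H} (hx : (augment H).Adj x (.inr p)) (hy : (augment H).Adj y (.inr p))
    (hxy : x ≠ y) : ¬ (augment H).Adj x y := by
  rcases x with a | q
  · rcases y with b | q
    · rw [augment_adj_inl_inl]
      intro hab
      rw [augment_adj_inl_inr] at hx hy
      have hp : p.1.1 = s(a, b) := (Sym2.mem_and_mem_iff hab.ne).mp ⟨hx, hy⟩
      exact p.1.2.2 (hp ▸ hab)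
    · exact absurd hy augment_not_adj_inr_inr
  · exact absurd hx augment_not_adj_inr_inr

lemma IsNClique.exists_inl_of_augment {T : Finset (AugVert H)}
    (hT : (augment H).IsNClique 3 T) {x : AugVert H} (hx : x ∈ T) : ∃ a, x = .inl a := by
  rcases x with a | p
  · exact ⟨a, rfl⟩
  classical
  obtain ⟨y, z, hyz, hT'⟩ : ∃ y z, y ≠ z ∧ T.erase (.inr p) = {y, z} := by
    rw [← Finset.card_eq_two, Finset.card_erase_of_mem hx, hT.card_eq]
  have hy : y ∈ T.erase (.inr p) := hT' ▸ Finset.mem_insert_self y {z}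
  have hz : z ∈ T.erase (.inr p) := hT' ▸ Finset.mem_insert_of_mem (Finset.mem_singleton_self z)
  have adj {u w} (hu : u ∈ T) (hw : w ∈ T) (huw : u ≠ w) := hT.isClique hu hw huw
  exact absurd (adj (Finset.mem_of_mem_erase hy) (Finset.mem_of_mem_erase hz) hyz)
    (augment_not_adj_of_adj_inr (adj (Finset.mem_of_mem_erase hy) hx (Finset.ne_of_mem_erase hy))
      (adj (Finset.mem_of_mem_erase hz) hx (Finset.ne_of_mem_erase hz)) hyz)

lemma augment_isNClique_three_iff {T : Finset (AugVert H)} :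
    (augment H).IsNClique 3 T ↔ (H.map Function.Embedding.inl).IsNClique 3 T := by
  refine ⟨fun hT ↦ ⟨?_, hT.card_eq⟩, IsNClique.mono map_inl_le_augment⟩
  intro x hx y hy hxy
  obtain ⟨a, rfl⟩ := hT.exists_inl_of_augment hx
  obtain ⟨b, rfl⟩ := hT.exists_inl_of_augment hy
  exact map_adj_apply.mpr (augment_adj_inl_inl.mp (hT.isClique hx hy hxy))

lemma augment_cliqueSet_three :
    (augment H).cliqueSet 3 = Finset.map Function.Embedding.inl '' H.cliqueSet 3 := by
  rw [← cliqueSet_map (by decide)]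
  ext T
  exact augment_isNClique_three_iff

end SimpleGraph

theorem augment_triangles {V : Type*} [DecidableEq V] (H : SimpleGraph V) :
    (∀ T : Finset (AugVert H),
      (augment H).IsNClique 3 T ↔
        ∃ S : Finset V, H.IsNClique 3 S ∧ T = S.image Sum.inl) ∧
    {T : Finset (AugVert H) | (augment H).IsNClique 3 T}.ncard
      = {S : Finset V | H.IsNClique 3 S}.ncard := by
  refine ⟨fun T ↦ ?_, ?_⟩
  · rw [augment_isNClique_three_iff, isNClique_map_iff (by decide : 1 < 3)]
    simp_rw [Finset.map_eq_image, eq_comm]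
    rfl
  · change ((augment H).cliqueSet 3).ncard = (H.cliqueSet 3).ncard
    rw [augment_cliqueSet_three, Set.ncard_image_of_injective _ (Finset.map_injective _)]
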